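/- Let (B,β) be a monoidal Hom-bialgebra, (A,α) a left (B,β)-Hom-module algebra with action b⊗a↦b·a, and (C,γ) a left (B,β)-Hom-comodule coalgebra with coaction c↦c_(-1)⊗c_(0). Then ψ:C⊗A→A⊗C, c⊗a↦c_(-1)·α^{-1}(a)⊗γ(c_(0)), defines a Hom-entwining structure [(A,α),(C,γ)]_ψ (the alternative Hom-Doi-Koppinen entwining). -/
import Mathlib


open TensorProduct

namespace HomPaper

variable {k : Type*} [CommRing k]
variable {A C V : Type*}
variable [AddCommGroup A] [Module k A] [AddCommGroup C] [Module k C]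
variable [AddCommGroup V] [Module k V]

/-- Monoidal Hom-algebra axioms. -/
def IsHomAlgebra (α : A ≃ₗ[k] A) (mul : A →ₗ[k] A →ₗ[k] A) (one : A) : Prop :=
  (∀ a b c, mul (α a) (mul b c) = mul (mul a b) (α c)) ∧
  (∀ a, mul a one = α a) ∧ (∀ a, mul one a = α a) ∧
  (∀ a b, α (mul a b) = mul (α a) (α b)) ∧ α one = one

/-- Monoidal Hom-coalgebra axioms. -/
def IsHomCoalgebra (γ : C ≃ₗ[k] C) (Δ : C →ₗ[k] C ⊗[k] C) (ε : C →ₗ[k] k) : Prop :=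
  (∀ c, TensorProduct.map γ.symm.toLinearMap Δ (Δ c)
      = TensorProduct.assoc k C C C (TensorProduct.map Δ γ.symm.toLinearMap (Δ c))) ∧
  (∀ c, TensorProduct.lid k C (TensorProduct.map ε LinearMap.id (Δ c)) = γ.symm c) ∧
  (∀ c, TensorProduct.rid k C (TensorProduct.map LinearMap.id ε (Δ c)) = γ.symm c) ∧
  (∀ c, Δ (γ c) = TensorProduct.map γ.toLinearMap γ.toLinearMap (Δ c)) ∧
  (∀ c, ε (γ c) = ε c)

/-- Hom-entwining structure axioms for ψ : C ⊗ A → A ⊗ C, ψ(c⊗a) = a_κ ⊗ c^κ. -/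
def IsHomEntwining (α : A ≃ₗ[k] A) (γ : C ≃ₗ[k] C) (mul : A →ₗ[k] A →ₗ[k] A) (one : A)
    (Δ : C →ₗ[k] C ⊗[k] C) (ε : C →ₗ[k] k) (ψ : C ⊗[k] A →ₗ[k] A ⊗[k] C) : Prop :=
  -- (aa')_κ ⊗ γ(c)^κ = a_κ a'_λ ⊗ γ(c^{κλ})
  (∀ c a a', ψ (γ c ⊗ₜ mul a a')
      = TensorProduct.map (TensorProduct.lift mul) γ.toLinearMap
          ((TensorProduct.assoc k A A C).symm
            (TensorProduct.map LinearMap.id ψ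
              (TensorProduct.assoc k A C A (ψ (c ⊗ₜ a) ⊗ₜ a'))))) ∧
  -- α⁻¹(a_κ) ⊗ c^κ₁ ⊗ c^κ₂ = α⁻¹(a)_{κλ} ⊗ c₁^λ ⊗ c₂^κ
  (∀ c a, TensorProduct.map α.symm.toLinearMap Δ (ψ (c ⊗ₜ a))
      = TensorProduct.assoc k A C C
          (TensorProduct.map ψ LinearMap.id
            ((TensorProduct.assoc k C A C).symm
              (TensorProduct.map LinearMap.id ψ
                (TensorProduct.assoc k C C A (Δ c ⊗ₜ α.symm a)))))) ∧
  -- 1_κ ⊗ c^κ = 1 ⊗ c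
  (∀ c, ψ (c ⊗ₜ one) = one ⊗ₜ c) ∧
  -- a_κ ε(c^κ) = a ε(c)
  (∀ c a, TensorProduct.rid k A (TensorProduct.map LinearMap.id ε (ψ (c ⊗ₜ a))) = ε c • a) ∧
  -- ψ is a morphism in the Hom-category
  (∀ c a, ψ (γ c ⊗ₜ α a) = TensorProduct.map α.toLinearMap γ.toLinearMap (ψ (c ⊗ₜ a)))

/-- The relations defining `V ⊗_A V` (on top of base relations `R₀` defining the coring
module as a quotient of `V`). -/
def corRel (R₀ : Submodule k V) (χ : V ≃ₗ[k] V)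
    (lact : A →ₗ[k] V →ₗ[k] V) (ract : V →ₗ[k] A →ₗ[k] V) : Submodule k (V ⊗[k] V) :=
  Submodule.span k
    ({x | ∃ v a w, x = ract v a ⊗ₜ w - χ v ⊗ₜ lact a (χ.symm w)} ∪
     {x | ∃ r w, r ∈ R₀ ∧ (x = r ⊗ₜ w ∨ x = w ⊗ₜ r)})

/-- Induced left A-action on `V ⊗_A V` (on representatives). -/
noncomputable def lact2 (α : A ≃ₗ[k] A) (χ : V ≃ₗ[k] V) (lact : A →ₗ[k] V →ₗ[k] V) (a : A) :
    V ⊗[k] V →ₗ[k] V ⊗[k] V :=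
  TensorProduct.map (lact (α.symm a)) χ.toLinearMap

/-- Induced right A-action on `V ⊗_A V` (on representatives). -/
noncomputable def ract2 (α : A ≃ₗ[k] A) (χ : V ≃ₗ[k] V) (ract : V →ₗ[k] A →ₗ[k] V) (a : A) :
    V ⊗[k] V →ₗ[k] V ⊗[k] V :=
  TensorProduct.map χ.toLinearMap (ract.flip (α.symm a))

/-- The relations defining `V ⊗_A (V ⊗_A V)`. -/
def corRel3 (R₀ : Submodule k V) (α : A ≃ₗ[k] A) (χ : V ≃ₗ[k] V)
    (lact : A →ₗ[k] V →ₗ[k] V) (ract : V →ₗ[k] A →ₗ[k] V) :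
    Submodule k (V ⊗[k] (V ⊗[k] V)) :=
  Submodule.span k
    ({x | ∃ v a w, x = ract v a ⊗ₜ w - χ v ⊗ₜ lact2 α χ lact a w} ∪
     {x | ∃ v w, w ∈ corRel R₀ χ lact ract ∧ x = v ⊗ₜ w} ∪
     {x | ∃ r w, r ∈ R₀ ∧ x = r ⊗ₜ w})

/-- `(V,χ)` (modulo the relations `R₀`) together with the A-bimodule structure
`lact`, `ract`, comultiplication representative `Δ` and counit `ε` is an
`(A,α)`-Hom-coring: all axioms are stated on representatives, under the quotient
projections by `R₀` resp. the tensor-relation submodules. -/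
def IsHomCoring (α : A ≃ₗ[k] A) (mul : A →ₗ[k] A →ₗ[k] A) (one : A)
    (χ : V ≃ₗ[k] V) (lact : A →ₗ[k] V →ₗ[k] V) (ract : V →ₗ[k] A →ₗ[k] V)
    (R₀ : Submodule k V) (Δ : V →ₗ[k] V ⊗[k] V) (ε : V →ₗ[k] A) : Prop :=
  -- (V,χ) is an (A,α)-Hom-bimodule
  (∀ a b v, Submodule.Quotient.mk (p := R₀) (lact (mul a b) (χ v))
      = Submodule.Quotient.mk (p := R₀) (lact (α a) (lact b v))) ∧
  (∀ v, Submodule.Quotient.mk (p := R₀) (lact one v) = Submodule.Quotient.mk (p := R₀) (χ v)) ∧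
  (∀ v a b, Submodule.Quotient.mk (p := R₀) (ract (χ v) (mul a b))
      = Submodule.Quotient.mk (p := R₀) (ract (ract v a) (α b))) ∧
  (∀ v, Submodule.Quotient.mk (p := R₀) (ract v one) = Submodule.Quotient.mk (p := R₀) (χ v)) ∧
  (∀ a v b, Submodule.Quotient.mk (p := R₀) (ract (lact a v) (α b))
      = Submodule.Quotient.mk (p := R₀) (lact (α a) (ract v b))) ∧
  (∀ a v, Submodule.Quotient.mk (p := R₀) (χ (lact a v))
      = Submodule.Quotient.mk (p := R₀) (lact (α a) (χ v))) ∧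
  (∀ v a, Submodule.Quotient.mk (p := R₀) (χ (ract v a))
      = Submodule.Quotient.mk (p := R₀) (ract (χ v) (α a))) ∧
  (∀ r ∈ R₀, χ r ∈ R₀) ∧
  -- Δ and ε are well defined on the quotient by R₀
  (∀ r ∈ R₀, Submodule.Quotient.mk (p := corRel R₀ χ lact ract) (Δ r) = 0) ∧
  (∀ r ∈ R₀, ε r = 0) ∧
  -- A-bilinearity of Δ
  (∀ a v, Submodule.Quotient.mk (p := corRel R₀ χ lact ract) (Δ (lact a v))
      = Submodule.Quotient.mk (p := corRel R₀ χ lact ract) (lact2 α χ lact a (Δ v))) ∧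
  (∀ v a, Submodule.Quotient.mk (p := corRel R₀ χ lact ract) (Δ (ract v a))
      = Submodule.Quotient.mk (p := corRel R₀ χ lact ract) (ract2 α χ ract a (Δ v))) ∧
  -- A-bilinearity of ε
  (∀ a v, ε (lact a v) = mul a (ε v)) ∧
  (∀ v a, ε (ract v a) = mul (ε v) a) ∧
  -- Hom-coassociativity: χ⁻¹(c₁) ⊗ Δ(c₂) = c₁₁ ⊗ (c₁₂ ⊗ χ⁻¹(c₂))
  (∀ v, Submodule.Quotient.mk (p := corRel3 R₀ α χ lact ract)
        (TensorProduct.map χ.symm.toLinearMap Δ (Δ v))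
      = Submodule.Quotient.mk (p := corRel3 R₀ α χ lact ract)
        (TensorProduct.assoc k V V V (TensorProduct.map Δ χ.symm.toLinearMap (Δ v)))) ∧
  -- counity: ε(c₁)c₂ = c = c₁ε(c₂)
  (∀ v, Submodule.Quotient.mk (p := R₀) (TensorProduct.lift (lact ∘ₗ ε) (Δ v))
      = Submodule.Quotient.mk (p := R₀) v) ∧
  (∀ v, Submodule.Quotient.mk (p := R₀) (TensorProduct.lift (ract.compl₂ ε) (Δ v))
      = Submodule.Quotient.mk (p := R₀) v) ∧
  -- compatibility with the twisting maps
  (∀ v, Submodule.Quotient.mk (p := corRel R₀ χ lact ract) (Δ (χ v))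
      = Submodule.Quotient.mk (p := corRel R₀ χ lact ract)
        (TensorProduct.map χ.toLinearMap χ.toLinearMap (Δ v))) ∧
  (∀ v, ε (χ v) = α (ε v))

end HomPaper

namespace HomPaper

variable {k A B C : Type*} [CommRing k]
variable [AddCommGroup A] [Module k A] [AddCommGroup B] [Module k B]
variable [AddCommGroup C] [Module k C]

/-- `(A,α)` is a left `(B,β)`-Hom-module algebra with action `lact`. -/
def IsHomLeftModuleAlgebra (β : B ≃ₗ[k] B) (mulB : B →ₗ[k] B →ₗ[k] B) (oneB : B)
    (ΔB : B →ₗ[k] B ⊗[k] B) (εB : B →ₗ[k] k)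
    (α : A ≃ₗ[k] A) (mulA : A →ₗ[k] A →ₗ[k] A) (oneA : A)
    (lact : B →ₗ[k] A →ₗ[k] A) : Prop :=
  -- left Hom-module axioms
  (∀ b b' a, lact (mulB b b') (α a) = lact (β b) (lact b' a)) ∧
  (∀ a, lact oneB a = α a) ∧
  (∀ b a, α (lact b a) = lact (β b) (α a)) ∧
  -- Hom-module algebra conditions: b·(aa') = (b₁·a)(b₂·a'), b·1 = ε(b)1
  (∀ b a a', lact b (mulA a a')
      = (TensorProduct.lift mulA)
          ((TensorProduct.map (TensorProduct.lift lact) (TensorProduct.lift lact))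
            (TensorProduct.tensorTensorTensorComm k B B A A (ΔB b ⊗ₜ (a ⊗ₜ a'))))) ∧
  (∀ b, lact b oneA = εB b • oneA)

/-- `(C,γ)` is a left `(B,β)`-Hom-comodule coalgebra with coaction `ρ(c) = c₍₋₁₎⊗c₍₀₎`. -/
def IsHomLeftComoduleCoalgebra (β : B ≃ₗ[k] B) (mulB : B →ₗ[k] B →ₗ[k] B) (oneB : B)
    (ΔB : B →ₗ[k] B ⊗[k] B) (εB : B →ₗ[k] k)
    (γ : C ≃ₗ[k] C) (ΔC : C →ₗ[k] C ⊗[k] C) (εC : C →ₗ[k] k)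
    (ρ : C →ₗ[k] B ⊗[k] C) : Prop :=
  -- left Hom-comodule axioms
  (∀ c, TensorProduct.map ΔB γ.symm.toLinearMap (ρ c)
      = (TensorProduct.assoc k B B C).symm
          (TensorProduct.map β.symm.toLinearMap ρ (ρ c))) ∧
  (∀ c, TensorProduct.lid k C (TensorProduct.map εB LinearMap.id (ρ c)) = γ.symm c) ∧
  (∀ c, ρ (γ c) = TensorProduct.map β.toLinearMap γ.toLinearMap (ρ c)) ∧
  -- Hom-comodule coalgebra conditions:
  -- c₍₋₁₎ ⊗ c₍₀₎₁ ⊗ c₍₀₎₂ = c₁₍₋₁₎c₂₍₋₁₎ ⊗ c₁₍₀₎ ⊗ c₂₍₀₎, c₍₋₁₎ε(c₍₀₎) = 1_B ε(c)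
  (∀ c, TensorProduct.map LinearMap.id ΔC (ρ c)
      = (TensorProduct.map (TensorProduct.lift mulB) LinearMap.id)
          (TensorProduct.tensorTensorTensorComm k B C B C
            (TensorProduct.map ρ ρ (ΔC c)))) ∧
  (∀ c, TensorProduct.rid k B (TensorProduct.map LinearMap.id εC (ρ c)) = εC c • oneB)

/-- The alternative Hom-Doi-Koppinen entwining map:
`ψ(c⊗a) = c₍₋₁₎·α⁻¹(a) ⊗ γ(c₍₀₎)`. -/
noncomputable def altDkEntwining (α : A ≃ₗ[k] A) (γ : C ≃ₗ[k] C)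
    (lact : B →ₗ[k] A →ₗ[k] A) (ρC : C →ₗ[k] B ⊗[k] C) :
    C ⊗[k] A →ₗ[k] A ⊗[k] C :=
  (TensorProduct.map (TensorProduct.lift lact) γ.toLinearMap) ∘ₗ
    (TensorProduct.assoc k B A C).symm.toLinearMap ∘ₗ
      (TensorProduct.map LinearMap.id (TensorProduct.comm k C A).toLinearMap) ∘ₗ
        (TensorProduct.assoc k B C A).toLinearMap ∘ₗ
          (TensorProduct.map ρC α.symm.toLinearMap)


noncomputable def Gmap (γ : C ≃ₗ[k] C) (lact : B →ₗ[k] A →ₗ[k] A) :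
    (B ⊗[k] C) ⊗[k] A →ₗ[k] A ⊗[k] C :=
  (TensorProduct.map (TensorProduct.lift lact) γ.toLinearMap) ∘ₗ
    (TensorProduct.assoc k B A C).symm.toLinearMap ∘ₗ
      (TensorProduct.map LinearMap.id (TensorProduct.comm k C A).toLinearMap) ∘ₗ
        (TensorProduct.assoc k B C A).toLinearMap

lemma Gmap_tmul (γ : C ≃ₗ[k] C) (lact : B →ₗ[k] A →ₗ[k] A) (b : B) (x : C) (y : A) :
    Gmap γ lact ((b ⊗ₜ x) ⊗ₜ y) = lact b y ⊗ₜ γ x := by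
  simp [Gmap]

lemma psi_eq (α : A ≃ₗ[k] A) (γ : C ≃ₗ[k] C) (lact : B →ₗ[k] A →ₗ[k] A)
    (ρC : C →ₗ[k] B ⊗[k] C) (c : C) (a : A) :
    altDkEntwining α γ lact ρC (c ⊗ₜ a) = Gmap γ lact (ρC c ⊗ₜ α.symm a) := by
  simp [altDkEntwining, Gmap]

noncomputable def Tmap (β : B ≃ₗ[k] B) (γ : C ≃ₗ[k] C) (mulA : A →ₗ[k] A →ₗ[k] A)
    (lact : B →ₗ[k] A →ₗ[k] A) (x₁ x₂ : A) : (B ⊗[k] B) ⊗[k] C →ₗ[k] A ⊗[k] C :=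
  TensorProduct.map
    ((TensorProduct.lift mulA) ∘ₗ
      TensorProduct.map (lact.flip x₁ ∘ₗ β.toLinearMap) (lact.flip x₂ ∘ₗ β.toLinearMap))
    (γ.toLinearMap ∘ₗ γ.toLinearMap ∘ₗ γ.toLinearMap)

lemma Tmap_tmul (β : B ≃ₗ[k] B) (γ : C ≃ₗ[k] C) (mulA : A →ₗ[k] A →ₗ[k] A)
    (lact : B →ₗ[k] A →ₗ[k] A) (x₁ x₂ : A) (b₁ b₂ : B) (x : C) :
    Tmap β γ mulA lact x₁ x₂ ((b₁ ⊗ₜ b₂) ⊗ₜ x)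
      = mulA (lact (β b₁) x₁) (lact (β b₂) x₂) ⊗ₜ γ (γ (γ x)) := by
  simp [Tmap]

noncomputable def Smap (β : B ≃ₗ[k] B) (γ : C ≃ₗ[k] C)
    (lact : B →ₗ[k] A →ₗ[k] A) (x : A) :
    B ⊗[k] (C ⊗[k] C) →ₗ[k] A ⊗[k] (C ⊗[k] C) :=
  TensorProduct.map (lact.flip x ∘ₗ β.symm.toLinearMap)
    (TensorProduct.map γ.toLinearMap γ.toLinearMap)

lemma Smap_tmul (β : B ≃ₗ[k] B) (γ : C ≃ₗ[k] C)
    (lact : B →ₗ[k] A →ₗ[k] A) (x : A) (b : B) (x₁ x₂ : C) :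
    Smap β γ lact x (b ⊗ₜ (x₁ ⊗ₜ x₂)) = lact (β.symm b) x ⊗ₜ (γ x₁ ⊗ₜ γ x₂) := by
  simp [Smap]

set_option maxHeartbeats 2000000 in
/-- Let `(B,β)` be a monoidal Hom-bialgebra, `(A,α)` a left
`(B,β)`-Hom-module algebra and `(C,γ)` a left `(B,β)`-Hom-comodule coalgebra. Then
`ψ : C⊗A → A⊗C`, `c⊗a ↦ c₍₋₁₎·α⁻¹(a) ⊗ γ(c₍₀₎)`, defines a Hom-entwining structure
`[(A,α),(C,γ)]_ψ` (the alternative Hom-Doi-Koppinen entwining). -/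
theorem alternative_doiKoppinen_entwining
    (β : B ≃ₗ[k] B) (mulB : B →ₗ[k] B →ₗ[k] B) (oneB : B)
    (ΔB : B →ₗ[k] B ⊗[k] B) (εB : B →ₗ[k] k)
    (hBalg : IsHomAlgebra β mulB oneB) (hBco : IsHomCoalgebra β ΔB εB)
    (hbi1 : ∀ b b', ΔB (mulB b b')
      = (TensorProduct.map (TensorProduct.lift mulB) (TensorProduct.lift mulB))
          (TensorProduct.tensorTensorTensorComm k B B B B (ΔB b ⊗ₜ ΔB b')))
    (hbi2 : ΔB oneB = oneB ⊗ₜ oneB)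
    (hbi3 : ∀ b b', εB (mulB b b') = εB b * εB b') (hbi4 : εB oneB = 1)
    (α : A ≃ₗ[k] A) (mulA : A →ₗ[k] A →ₗ[k] A) (oneA : A)
    (hAalg : IsHomAlgebra α mulA oneA)
    (lactA : B →ₗ[k] A →ₗ[k] A)
    (hA : IsHomLeftModuleAlgebra β mulB oneB ΔB εB α mulA oneA lactA)
    (γ : C ≃ₗ[k] C) (ΔC : C →ₗ[k] C ⊗[k] C) (εC : C →ₗ[k] k)
    (hCco : IsHomCoalgebra γ ΔC εC)
    (ρC : C →ₗ[k] B ⊗[k] C)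
    (hC : IsHomLeftComoduleCoalgebra β mulB oneB ΔB εB γ ΔC εC ρC) :
    IsHomEntwining α γ mulA oneA ΔC εC (altDkEntwining α γ lactA ρC) := by
  obtain ⟨hBassoc, hBoner, hBonel, hBmulβ, hBoneβ⟩ := hBalg
  obtain ⟨hBco1, hBco2, hBco3, hBΔβ, hBεβ⟩ := hBco
  obtain ⟨hAassoc, hAoner, hAonel, hAmulα, hAoneα⟩ := hAalg
  obtain ⟨hMod1, hMod2, hMod3, hMod4, hMod5⟩ := hA
  obtain ⟨hCco1, hCco2, hCco3, hΔγ, hεγ⟩ := hCco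
  obtain ⟨hCo1, hCo2, hCo3, hCo4, hCo5⟩ := hC
  have hαinv_one : α.symm oneA = oneA := by
    conv_lhs => rw [← hAoneα, LinearEquiv.symm_apply_apply]
  have hαinv_mul : ∀ x y, α.symm (mulA x y) = mulA (α.symm x) (α.symm y) := by
    intro x y
    apply α.injective
    rw [α.apply_symm_apply, hAmulα, α.apply_symm_apply, α.apply_symm_apply]
  have hαinv_lact : ∀ b x, α.symm (lactA b x) = lactA (β.symm b) (α.symm x) := by
    intro b x
    apply α.injective
    rw [α.apply_symm_apply, hMod3, β.apply_symm_apply, α.apply_symm_apply]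
  have hβinv_mul : ∀ b b', β.symm (mulB b b') = mulB (β.symm b) (β.symm b') := by
    intro b b'
    apply β.injective
    rw [β.apply_symm_apply, hBmulβ, β.apply_symm_apply, β.apply_symm_apply]
  refine ⟨?_, ?_, ?_, ?_, ?_⟩
  · -- axiom 1
    intro c a a'
    rw [psi_eq, psi_eq, hCo3, hαinv_mul]
    have hL : ∀ t : B ⊗[k] C,
        Gmap γ lactA (TensorProduct.map β.toLinearMap γ.toLinearMap t
            ⊗ₜ mulA (α.symm a) (α.symm a'))
          = Tmap β γ mulA lactA (α.symm a) (α.symm a')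
              (TensorProduct.map ΔB γ.symm.toLinearMap t) := by
      intro t
      induction t using TensorProduct.induction_on with
      | zero => simp
      | add u v hu hv => simp only [map_add, add_tmul, LinearMap.add_apply] at hu hv ⊢; rw [hu, hv]
      | tmul b x =>
          simp only [TensorProduct.map_tmul, Gmap_tmul, hMod4, hBΔβ,
            LinearEquiv.coe_coe]
          have sub : ∀ u : B ⊗[k] B,
              (TensorProduct.lift mulA)
                  ((TensorProduct.map (TensorProduct.lift lactA) (TensorProduct.lift lactA))
                    (TensorProduct.tensorTensorTensorComm k B B A A
                      ((TensorProduct.map β.toLinearMap β.toLinearMap u)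
                        ⊗ₜ (α.symm a ⊗ₜ α.symm a')))) ⊗ₜ[k] γ (γ x)
                = Tmap β γ mulA lactA (α.symm a) (α.symm a') (u ⊗ₜ γ.symm x) := by
            intro u
            induction u using TensorProduct.induction_on with
            | zero => simp
            | add u v hu hv => simp only [map_add, add_tmul, tmul_add, LinearMap.add_apply] at hu hv ⊢; rw [hu, hv]
            | tmul b₁ b₂ =>
                rw [Tmap_tmul]
                simp [tensorTensorTensorComm_tmul]
          exact sub (ΔB b)
    have hR : ∀ t : B ⊗[k] C,
        TensorProduct.map (TensorProduct.lift mulA) γ.toLinearMap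
            ((TensorProduct.assoc k A A C).symm
              (TensorProduct.map LinearMap.id (altDkEntwining α γ lactA ρC)
                (TensorProduct.assoc k A C A ((Gmap γ lactA (t ⊗ₜ α.symm a)) ⊗ₜ a'))))
          = Tmap β γ mulA lactA (α.symm a) (α.symm a')
              ((TensorProduct.assoc k B B C).symm
                (TensorProduct.map β.symm.toLinearMap ρC t)) := by
      intro t
      induction t using TensorProduct.induction_on with
      | zero => simp
      | add u v hu hv => simp only [map_add, add_tmul, tmul_add, LinearMap.add_apply] at hu hv ⊢; rw [hu, hv]
      | tmul b x =>
          rw [Gmap_tmul]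
          simp only [TensorProduct.map_tmul, assoc_tmul, LinearMap.id_coe, id_eq,
            LinearEquiv.coe_coe]
          rw [psi_eq, hCo3]
          have sub : ∀ s : B ⊗[k] C,
              TensorProduct.map (TensorProduct.lift mulA) γ.toLinearMap
                  ((TensorProduct.assoc k A A C).symm
                    (lactA b (α.symm a) ⊗ₜ
                      (Gmap γ lactA
                        ((TensorProduct.map β.toLinearMap γ.toLinearMap s) ⊗ₜ α.symm a'))))
                = Tmap β γ mulA lactA (α.symm a) (α.symm a')
                    ((TensorProduct.assoc k B B C).symm (β.symm b ⊗ₜ s)) := by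
            intro s
            induction s using TensorProduct.induction_on with
            | zero => simp
            | add u v hu hv => simp only [map_add, add_tmul, tmul_add, LinearMap.add_apply] at hu hv ⊢; rw [hu, hv]
            | tmul b' y =>
                simp only [TensorProduct.map_tmul, Gmap_tmul, assoc_symm_tmul,
                  LinearEquiv.coe_coe, Tmap_tmul, β.apply_symm_apply,
                  TensorProduct.lift.tmul]
          exact sub (ρC x)
    rw [hL, hR, hCo1]
  · -- axiom 2
    intro c a
    rw [psi_eq]
    have hL : ∀ t : B ⊗[k] C,
        TensorProduct.map α.symm.toLinearMap ΔC (Gmap γ lactA (t ⊗ₜ α.symm a))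
          = Smap β γ lactA (α.symm (α.symm a)) (TensorProduct.map LinearMap.id ΔC t) := by
      intro t
      induction t using TensorProduct.induction_on with
      | zero => simp
      | add u v hu hv => simp only [map_add, add_tmul, LinearMap.add_apply] at hu hv ⊢; rw [hu, hv]
      | tmul b x =>
          simp only [Gmap_tmul, TensorProduct.map_tmul, hαinv_lact, hΔγ,
            LinearMap.id_coe, id_eq, LinearEquiv.coe_coe]
          have sub : ∀ d : C ⊗[k] C,
              lactA (β.symm b) (α.symm (α.symm a)) ⊗ₜ
                  (TensorProduct.map γ.toLinearMap γ.toLinearMap d)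
                = Smap β γ lactA (α.symm (α.symm a)) (b ⊗ₜ d) := by
            intro d
            induction d using TensorProduct.induction_on with
            | zero => simp
            | add u v hu hv => simp only [map_add, tmul_add, LinearMap.add_apply] at hu hv ⊢; rw [hu, hv]
            | tmul x₁ x₂ => rw [Smap_tmul]; simp
          exact sub (ΔC x)
    have hR : ∀ d : C ⊗[k] C,
        TensorProduct.assoc k A C C
            (TensorProduct.map (altDkEntwining α γ lactA ρC) LinearMap.id
              ((TensorProduct.assoc k C A C).symm
                (TensorProduct.map LinearMap.id (altDkEntwining α γ lactA ρC)
                  (TensorProduct.assoc k C C A (d ⊗ₜ α.symm a)))))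
          = Smap β γ lactA (α.symm (α.symm a))
              ((TensorProduct.map (TensorProduct.lift mulB) LinearMap.id)
                (TensorProduct.tensorTensorTensorComm k B C B C
                  (TensorProduct.map ρC ρC d))) := by
      intro d
      induction d using TensorProduct.induction_on with
      | zero => simp
      | add u v hu hv => simp only [map_add, add_tmul, LinearMap.add_apply] at hu hv ⊢; rw [hu, hv]
      | tmul c₁ c₂ =>
          simp only [assoc_tmul, TensorProduct.map_tmul, LinearMap.id_coe, id_eq,
            LinearEquiv.coe_coe]
          rw [psi_eq]
          have sub : ∀ s₂ : B ⊗[k] C,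
              TensorProduct.assoc k A C C
                  (TensorProduct.map (altDkEntwining α γ lactA ρC) LinearMap.id
                    ((TensorProduct.assoc k C A C).symm
                      (c₁ ⊗ₜ (Gmap γ lactA (s₂ ⊗ₜ α.symm (α.symm a))))))
                = Smap β γ lactA (α.symm (α.symm a))
                    ((TensorProduct.map (TensorProduct.lift mulB) LinearMap.id)
                      (TensorProduct.tensorTensorTensorComm k B C B C (ρC c₁ ⊗ₜ s₂))) := by
            intro s₂
            induction s₂ using TensorProduct.induction_on with
            | zero => simp
            | add u v hu hv => simp only [map_add, add_tmul, tmul_add, LinearMap.add_apply] at hu hv ⊢; rw [hu, hv]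
            | tmul b₂ y =>
                rw [Gmap_tmul]
                simp only [TensorProduct.map_tmul, assoc_symm_tmul,
                  LinearMap.id_coe, id_eq, LinearEquiv.coe_coe]
                rw [psi_eq, hαinv_lact]
                have sub2 : ∀ s₁ : B ⊗[k] C,
                    TensorProduct.assoc k A C C
                        ((Gmap γ lactA
                            (s₁ ⊗ₜ lactA (β.symm b₂) (α.symm (α.symm (α.symm a)))))
                          ⊗ₜ γ y)
                      = Smap β γ lactA (α.symm (α.symm a))
                          ((TensorProduct.map (TensorProduct.lift mulB) LinearMap.id)
                            (TensorProduct.tensorTensorTensorComm k B C B C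
                              (s₁ ⊗ₜ (b₂ ⊗ₜ y)))) := by
                  intro s₁
                  induction s₁ using TensorProduct.induction_on with
                  | zero => simp
                  | add u v hu hv => simp only [map_add, add_tmul, tmul_add, LinearMap.add_apply] at hu hv ⊢; rw [hu, hv]
                  | tmul b₁ x =>
                      rw [Gmap_tmul]
                      simp only [assoc_tmul, tensorTensorTensorComm_tmul,
                        TensorProduct.map_tmul, LinearMap.id_coe, id_eq,
                        TensorProduct.lift.tmul, Smap_tmul]
                      rw [hβinv_mul]
                      have : lactA (mulB (β.symm b₁) (β.symm b₂)) (α.symm (α.symm a))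
                          = lactA (β (β.symm b₁))
                              (lactA (β.symm b₂) (α.symm (α.symm (α.symm a)))) := by
                        rw [← hMod1, α.apply_symm_apply]
                      rw [this, β.apply_symm_apply]
                exact sub2 (ρC c₁)
          exact sub (ρC c₂)
    rw [hL, hR, hCo4]
  · -- axiom 3
    intro c
    rw [psi_eq, hαinv_one]
    have key : ∀ t : B ⊗[k] C, Gmap γ lactA (t ⊗ₜ oneA)
        = oneA ⊗ₜ γ (TensorProduct.lid k C (TensorProduct.map εB LinearMap.id t)) := by
      intro t
      induction t using TensorProduct.induction_on with
      | zero => simp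
      | add u v hu hv => simp only [map_add, add_tmul, tmul_add, LinearMap.add_apply] at hu hv ⊢; rw [hu, hv]
      | tmul b x =>
          rw [Gmap_tmul, hMod5]
          simp [smul_tmul, TensorProduct.lid_tmul]
    rw [key, hCo2, γ.apply_symm_apply]
  · -- axiom 4
    intro c a
    rw [psi_eq]
    have key : ∀ t : B ⊗[k] C,
        TensorProduct.rid k A (TensorProduct.map LinearMap.id εC
          (Gmap γ lactA (t ⊗ₜ α.symm a)))
        = lactA (TensorProduct.rid k B (TensorProduct.map LinearMap.id εC t)) (α.symm a) := by
      intro t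
      induction t using TensorProduct.induction_on with
      | zero => simp
      | add u v hu hv => simp only [map_add, add_tmul, LinearMap.add_apply] at hu hv ⊢; rw [hu, hv]
      | tmul b x =>
          rw [Gmap_tmul]
          simp [hεγ, TensorProduct.rid_tmul]
    rw [key, hCo5, map_smul, LinearMap.smul_apply, hMod2, α.apply_symm_apply]
  · -- axiom 5
    intro c a
    rw [psi_eq, psi_eq, hCo3, α.symm_apply_apply]
    have key : ∀ (t : B ⊗[k] C) (x : A),
        Gmap γ lactA ((TensorProduct.map β.toLinearMap γ.toLinearMap t) ⊗ₜ α x)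
          = TensorProduct.map α.toLinearMap γ.toLinearMap (Gmap γ lactA (t ⊗ₜ x)) := by
      intro t x
      induction t using TensorProduct.induction_on with
      | zero => simp
      | add u v hu hv => simp only [map_add, add_tmul, LinearMap.add_apply] at hu hv ⊢; rw [hu, hv]
      | tmul b y =>
          simp only [TensorProduct.map_tmul, Gmap_tmul, LinearEquiv.coe_coe, hMod3]
    have h := key (ρC c) (α.symm a)
    rw [α.apply_symm_apply] at h
    exact h


end HomPaper
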